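/- Let A₁, A₂, B₁, B₂, A, B be CIF vector subspaces of V, all pairwise homogeneous with one another and with the derived CIF sets appearing below. Then for all α, β ∈ K: [αA₁ + βA₂, B] = α[A₁, B] + β[A₂, B] and [A, αB₁ + βB₂] = α[A, B₁] + β[A, B₂]. -/
import Mathlib


namespace CIF

/-- A complex intuitionistic fuzzy (CIF) set on `V`, recorded by the four real-valued
degree functions `r, ω, r̂, ω̂` (so that the membership degree is `λ = r·e^{i2πω}` and
the non-membership degree is `ρ = r̂·e^{i2πω̂}`).  The order on such complex values is
componentwise, so all notions below are phrased componentwise in the four functions. -/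
structure CIFSet (V : Type*) where
  r : V → ℝ
  w : V → ℝ
  rhat : V → ℝ
  what : V → ℝ

namespace CIFSet

/-- `A` is a genuine CIF set: all degree functions take values in `[0,1]` and
`r_A(x) + r̂_A(x) ≤ 1` for all `x`. -/
def IsCIF {V : Type*} (A : CIFSet V) : Prop :=
  ∀ x, A.r x ∈ Set.Icc (0 : ℝ) 1 ∧ A.w x ∈ Set.Icc (0 : ℝ) 1 ∧
    A.rhat x ∈ Set.Icc (0 : ℝ) 1 ∧ A.what x ∈ Set.Icc (0 : ℝ) 1 ∧
    A.r x + A.rhat x ≤ 1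

/-- `A ⊆ B` : `λ_A(x) ≤ λ_B(x)` and `ρ_A(x) ≥ ρ_B(x)` for all `x`
(componentwise in `r, ω`, resp. `r̂, ω̂`). -/
def Subset {V : Type*} (A B : CIFSet V) : Prop :=
  ∀ x, A.r x ≤ B.r x ∧ A.w x ≤ B.w x ∧ B.rhat x ≤ A.rhat x ∧ B.what x ≤ A.what x

/-- `A` is homogeneous with `B`. -/
def Homog {V : Type*} (A B : CIFSet V) : Prop :=
  (∀ x y, A.r x ≤ B.r y ↔ A.w x ≤ B.w y) ∧
  (∀ x y, A.rhat x ≤ B.rhat y ↔ A.what x ≤ B.what y)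

end CIFSet

/-- Supremum of `min (f a) (g b)` over all decompositions `x = a + b`
(the `insert 0` is harmless since all values are `≥ 0`, and makes the value `0`
when no decomposition exists). -/
noncomputable def supDecomp {V : Type*} [Add V] (f g : V → ℝ) (x : V) : ℝ :=
  sSup (insert 0 {t | ∃ a b : V, x = a + b ∧ t = min (f a) (g b)})

/-- Infimum of `max (f a) (g b)` over all decompositions `x = a + b`
(the `insert 1` is harmless since all values are `≤ 1`, and makes the value `1`
when no decomposition exists). -/
noncomputable def infDecomp {V : Type*} [Add V] (f g : V → ℝ) (x : V) : ℝ :=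
  sInf (insert 1 {t | ∃ a b : V, x = a + b ∧ t = max (f a) (g b)})

/-- The complex intuitionistic sum `A + B` of two CIF sets. -/
noncomputable def CIFSet.sum {V : Type*} [Add V] (A B : CIFSet V) : CIFSet V where
  r := supDecomp A.r B.r
  w := supDecomp A.w B.w
  rhat := infDecomp A.rhat B.rhat
  what := infDecomp A.what B.what

/-- `A` is a CIF vector subspace of `V` (with the normalizations
`λ_A(0) = 1·e^{i2π·1}` and `ρ_A(0) = 0·e^{i2π·0}`). -/
structure CIFSet.IsSubspace (K : Type*) [Field K] {V : Type*} [AddCommGroup V]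
    [Module K V] (A : CIFSet V) : Prop where
  isCIF : A.IsCIF
  add_r : ∀ x y, min (A.r x) (A.r y) ≤ A.r (x + y)
  add_w : ∀ x y, min (A.w x) (A.w y) ≤ A.w (x + y)
  add_rhat : ∀ x y, A.rhat (x + y) ≤ max (A.rhat x) (A.rhat y)
  add_what : ∀ x y, A.what (x + y) ≤ max (A.what x) (A.what y)
  smul_r : ∀ (c : K) (x : V), A.r x ≤ A.r (c • x)
  smul_w : ∀ (c : K) (x : V), A.w x ≤ A.w (c • x)
  smul_rhat : ∀ (c : K) (x : V), A.rhat (c • x) ≤ A.rhat x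
  smul_what : ∀ (c : K) (x : V), A.what (c • x) ≤ A.what x
  r_zero : A.r 0 = 1
  w_zero : A.w 0 = 1
  rhat_zero : A.rhat 0 = 0
  what_zero : A.what 0 = 0

open Classical in
/-- The scalar multiple `c • A` of a CIF set: for `c ≠ 0` it is `x ↦ A(c⁻¹ x)`;
for `c = 0` it is `1 = 1·e^{i2π·1}` (resp. `ρ = 0`) at `0`, and `λ = 0`, `ρ = 1·e^{i2π·1}`
elsewhere. -/
noncomputable def CIFSet.smulCIF {K : Type*} [Field K] {V : Type*} [AddCommGroup V]
    [Module K V] (c : K) (A : CIFSet V) : CIFSet V where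
  r x := if c = 0 then (if x = 0 then 1 else 0) else A.r (c⁻¹ • x)
  w x := if c = 0 then (if x = 0 then 1 else 0) else A.w (c⁻¹ • x)
  rhat x := if c = 0 then (if x = 0 then 0 else 1) else A.rhat (c⁻¹ • x)
  what x := if c = 0 then (if x = 0 then 0 else 1) else A.what (c⁻¹ • x)

/-- The set of values `minᵢ (min (f xᵢ) (g yᵢ))` over all finite representations
`x = Σᵢ cᵢ • ⁅xᵢ, yᵢ⁆` with `cᵢ ∈ K`, `xᵢ, yᵢ ∈ V` (nonempty index family). -/
def bracketRepMin (K : Type*) [Field K] {V : Type*} [AddCommGroup V] [Module K V]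
    (br : V → V → V) (f g : V → ℝ) (x : V) : Set ℝ :=
  {t | ∃ (n : ℕ) (c : Fin (n + 1) → K) (a b : Fin (n + 1) → V),
    x = ∑ i, c i • br (a i) (b i) ∧
    t = Finset.univ.inf' Finset.univ_nonempty fun i => min (f (a i)) (g (b i))}

/-- The set of values `maxᵢ (max (f xᵢ) (g yᵢ))` over all finite representations
`x = Σᵢ cᵢ • ⁅xᵢ, yᵢ⁆`. -/
def bracketRepMax (K : Type*) [Field K] {V : Type*} [AddCommGroup V] [Module K V]
    (br : V → V → V) (f g : V → ℝ) (x : V) : Set ℝ :=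
  {t | ∃ (n : ℕ) (c : Fin (n + 1) → K) (a b : Fin (n + 1) → V),
    x = ∑ i, c i • br (a i) (b i) ∧
    t = Finset.univ.sup' Finset.univ_nonempty fun i => max (f (a i)) (g (b i))}

/-- The complex intuitionistic fuzzy bracket product `[A, B]` of two CIF sets, with
respect to the bracket `br` on `V`:  `r` and `ω` are the sup over all finite
representations `x = Σᵢ cᵢ [xᵢ, yᵢ]` of `minᵢ min(·(xᵢ), ·(yᵢ))` (and `0` when no
representation exists), `r̂` and `ω̂` are the inf of `maxᵢ max(·(xᵢ), ·(yᵢ))`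
(and `1` when no representation exists). -/
noncomputable def CIFSet.bracket (K : Type*) [Field K] {V : Type*} [AddCommGroup V]
    [Module K V] (br : V → V → V) (A B : CIFSet V) : CIFSet V where
  r x := sSup (insert 0 (bracketRepMin K br A.r B.r x))
  w x := sSup (insert 0 (bracketRepMin K br A.w B.w x))
  rhat x := sInf (insert 1 (bracketRepMax K br A.rhat B.rhat x))
  what x := sInf (insert 1 (bracketRepMax K br A.what B.what x))

/-- `V`, with the grading given by the complementary submodules `V0, V1` and the
bracket `br`, is a Lie superalgebra over `K`: the bracket is bilinear, respects the
grading, and satisfies super skew-symmetry and the super Jacobi identity on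
homogeneous elements (grades are recorded as `Bool`, `false ↦ V0`, `true ↦ V1`). -/
structure IsLieSuper (K : Type*) [Field K] {V : Type*} [AddCommGroup V] [Module K V]
    (V0 V1 : Submodule K V) (br : V → V → V) : Prop where
  compl : IsCompl V0 V1
  add_left : ∀ x y z : V, br (x + y) z = br x z + br y z
  add_right : ∀ x y z : V, br x (y + z) = br x y + br x z
  smul_left : ∀ (c : K) (x y : V), br (c • x) y = c • br x y
  smul_right : ∀ (c : K) (x y : V), br x (c • y) = c • br x y
  grade : ∀ (g h : Bool), ∀ x ∈ (bif g then V1 else V0), ∀ y ∈ (bif h then V1 else V0),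
    br x y ∈ (bif xor g h then V1 else V0)
  skew : ∀ (g h : Bool), ∀ x ∈ (bif g then V1 else V0), ∀ y ∈ (bif h then V1 else V0),
    br x y = -(((-1 : K) ^ ((bif g then 1 else 0) * (bif h then 1 else 0) : ℕ)) • br y x)
  jacobi : ∀ (g h k : Bool), ∀ x ∈ (bif g then V1 else V0), ∀ y ∈ (bif h then V1 else V0),
    ∀ z ∈ (bif k then V1 else V0),
    ((-1 : K) ^ ((bif g then 1 else 0) * (bif k then 1 else 0) : ℕ)) • br x (br y z) +
    ((-1 : K) ^ ((bif g then 1 else 0) * (bif h then 1 else 0) : ℕ)) • br y (br z x) +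
    ((-1 : K) ^ ((bif h then 1 else 0) * (bif k then 1 else 0) : ℕ)) • br z (br x y) = 0

/-- `A` is a ℤ₂-graded CIF vector subspace of `V` with graded components `A0, A1`:
`A0, A1` are CIF vector subspaces supported in `V0` resp. `V1` (membership degree `0`
and non-membership degree `1` outside), and `A = A0 + A1`. -/
structure IsGradedSubspace (K : Type*) [Field K] {V : Type*} [AddCommGroup V]
    [Module K V] (V0 V1 : Submodule K V) (A A0 A1 : CIFSet V) : Prop where
  subA : CIFSet.IsSubspace K A
  sub0 : CIFSet.IsSubspace K A0
  sub1 : CIFSet.IsSubspace K A1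
  supp0 : ∀ x, x ∉ V0 → A0.r x = 0 ∧ A0.w x = 0 ∧ A0.rhat x = 1 ∧ A0.what x = 1
  supp1 : ∀ x, x ∉ V1 → A1.r x = 0 ∧ A1.w x = 0 ∧ A1.rhat x = 1 ∧ A1.what x = 1
  eq : A = A0.sum A1

/-- `A` is a ℤ₂-graded CIF vector subspace of `V`. -/
def IsGraded (K : Type*) [Field K] {V : Type*} [AddCommGroup V] [Module K V]
    (V0 V1 : Submodule K V) (A : CIFSet V) : Prop :=
  ∃ A0 A1 : CIFSet V, IsGradedSubspace K V0 V1 A A0 A1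

/-- `A` is a CIF ideal of the Lie superalgebra `V`: a ℤ₂-graded CIF vector subspace
with `λ_A([x,y]) ≥ λ_A(x) ∨ λ_A(y)` and `ρ_A([x,y]) ≤ ρ_A(x) ∧ ρ_A(y)`. -/
structure IsIdeal (K : Type*) [Field K] {V : Type*} [AddCommGroup V] [Module K V]
    (V0 V1 : Submodule K V) (br : V → V → V) (A : CIFSet V) : Prop where
  graded : IsGraded K V0 V1 A
  br_r : ∀ x y, max (A.r x) (A.r y) ≤ A.r (br x y)
  br_w : ∀ x y, max (A.w x) (A.w y) ≤ A.w (br x y)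
  br_rhat : ∀ x y, A.rhat (br x y) ≤ min (A.rhat x) (A.rhat y)
  br_what : ∀ x y, A.what (br x y) ≤ min (A.what x) (A.what y)

/-- `f : V → V'` is an anti-homomorphism of Lie superalgebras: a `K`-linear map
preserving the grading with `f [x, y] = -[f x, f y]`. -/
structure IsAntiHom (K : Type*) [Field K] {V V' : Type*} [AddCommGroup V] [Module K V]
    [AddCommGroup V'] [Module K V'] (V0 V1 : Submodule K V) (W0 W1 : Submodule K V')
    (br : V → V → V) (br' : V' → V' → V') (f : V → V') : Prop where
  map_add : ∀ x y, f (x + y) = f x + f y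
  map_smul : ∀ (c : K) (x : V), f (c • x) = c • f x
  map_gr0 : ∀ x ∈ V0, f x ∈ W0
  map_gr1 : ∀ x ∈ V1, f x ∈ W1
  map_br : ∀ x y, f (br x y) = -br' (f x) (f y)

open Classical in
/-- The image `f(A)` of a CIF set under `f`: `λ_{f(A)}(y) = sup_{f x = y} λ_A(x)`
(componentwise) for `y` in the range of `f`, and `0` otherwise; `ρ_{f(A)}(y)` is the
corresponding inf, and `1` outside the range. -/
noncomputable def CIFSet.image {V V' : Type*} (f : V → V') (A : CIFSet V) :
    CIFSet V' where
  r y := if y ∈ Set.range f then sSup {t | ∃ x, f x = y ∧ t = A.r x} else 0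
  w y := if y ∈ Set.range f then sSup {t | ∃ x, f x = y ∧ t = A.w x} else 0
  rhat y := if y ∈ Set.range f then sInf {t | ∃ x, f x = y ∧ t = A.rhat x} else 1
  what y := if y ∈ Set.range f then sInf {t | ∃ x, f x = y ∧ t = A.what x} else 1

/-- The preimage `f⁻¹(B)` of a CIF set under `f`: `λ_{f⁻¹(B)}(x) = λ_B(f x)` and
`ρ_{f⁻¹(B)}(x) = ρ_B(f x)`. -/
def CIFSet.preimage {V V' : Type*} (f : V → V') (B : CIFSet V') : CIFSet V where
  r x := B.r (f x)
  w x := B.w (f x)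
  rhat x := B.rhat (f x)
  what x := B.what (f x)


/-! ### Auxiliary development -/

section Aux

variable {K : Type*} [Field K] {V : Type*} [AddCommGroup V] [Module K V]

lemma CIFSet.ext' {V : Type*} {A B : CIFSet V} (h1 : ∀ x, A.r x = B.r x)
    (h2 : ∀ x, A.w x = B.w x) (h3 : ∀ x, A.rhat x = B.rhat x)
    (h4 : ∀ x, A.what x = B.what x) : A = B := by
  cases A; cases B
  simp only [CIFSet.mk.injEq]
  exact ⟨funext h1, funext h2, funext h3, funext h4⟩

open Classical in
/-- The "delta" CIF set. -/
noncomputable def deltaCIF (V : Type*) [AddCommGroup V] : CIFSet V where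
  r x := if x = 0 then 1 else 0
  w x := if x = 0 then 1 else 0
  rhat x := if x = 0 then 0 else 1
  what x := if x = 0 then 0 else 1

lemma deltaCIF_r_zero : (deltaCIF V).r 0 = 1 := if_pos rfl
lemma deltaCIF_r_ne {x : V} (hx : x ≠ 0) : (deltaCIF V).r x = 0 := if_neg hx
lemma deltaCIF_rhat_zero : (deltaCIF V).rhat 0 = 0 := if_pos rfl
lemma deltaCIF_rhat_ne {x : V} (hx : x ≠ 0) : (deltaCIF V).rhat x = 1 := if_neg hx

lemma deltaCIF_r_nonneg (x : V) : 0 ≤ (deltaCIF V).r x := by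
  by_cases hx : x = 0 <;> simp [deltaCIF, hx]
lemma deltaCIF_r_le_one (x : V) : (deltaCIF V).r x ≤ 1 := by
  by_cases hx : x = 0 <;> simp [deltaCIF, hx]
lemma deltaCIF_rhat_nonneg (x : V) : 0 ≤ (deltaCIF V).rhat x := by
  by_cases hx : x = 0 <;> simp [deltaCIF, hx]
lemma deltaCIF_rhat_le_one (x : V) : (deltaCIF V).rhat x ≤ 1 := by
  by_cases hx : x = 0 <;> simp [deltaCIF, hx]

lemma deltaCIF_w_eq : (deltaCIF V).w = (deltaCIF V).r := rfl
lemma deltaCIF_what_eq : (deltaCIF V).what = (deltaCIF V).rhat := rfl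

lemma smulCIF_zero (A : CIFSet V) : CIFSet.smulCIF (0 : K) A = deltaCIF V := by
  refine CIFSet.ext' (fun x => ?_) (fun x => ?_) (fun x => ?_) (fun x => ?_) <;>
    · simp [CIFSet.smulCIF, deltaCIF]

/-! #### Membership and bound lemmas for `bracketRepMin` / `bracketRepMax` -/

variable (K)

lemma mem_repMin {br : V → V → V} {f g : V → ℝ} {x : V} {n : ℕ}
    (c : Fin (n + 1) → K) (a b : Fin (n + 1) → V)
    (hx : x = ∑ i, c i • br (a i) (b i)) :
    (Finset.univ.inf' Finset.univ_nonempty fun i => min (f (a i)) (g (b i))) ∈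
      bracketRepMin K br f g x :=
  ⟨n, c, a, b, hx, rfl⟩

lemma mem_repMax {br : V → V → V} {f g : V → ℝ} {x : V} {n : ℕ}
    (c : Fin (n + 1) → K) (a b : Fin (n + 1) → V)
    (hx : x = ∑ i, c i • br (a i) (b i)) :
    (Finset.univ.sup' Finset.univ_nonempty fun i => max (f (a i)) (g (b i))) ∈
      bracketRepMax K br f g x :=
  ⟨n, c, a, b, hx, rfl⟩

lemma single_mem_repMin {br : V → V → V} {f g : V → ℝ} (c : K) (a b : V) :
    min (f a) (g b) ∈ bracketRepMin K br f g (c • br a b) := by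
  have h : c • br a b = ∑ _i : Fin 1, c • br a b := by simp
  have := mem_repMin K (br := br) (f := f) (g := g) (fun _ : Fin 1 => c)
    (fun _ => a) (fun _ => b) h
  simpa using this

lemma single_mem_repMax {br : V → V → V} {f g : V → ℝ} (c : K) (a b : V) :
    max (f a) (g b) ∈ bracketRepMax K br f g (c • br a b) := by
  have h : c • br a b = ∑ _i : Fin 1, c • br a b := by simp
  have := mem_repMax K (br := br) (f := f) (g := g) (fun _ : Fin 1 => c)
    (fun _ => a) (fun _ => b) h
  simpa using this

lemma repMin_le_one {br : V → V → V} {f g : V → ℝ} (hf : ∀ y, f y ≤ 1) {x : V} :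
    ∀ t ∈ insert (0:ℝ) (bracketRepMin K br f g x), t ≤ 1 := by
  rintro t (rfl | ⟨n, c, a, b, hx, rfl⟩)
  · norm_num
  · refine le_trans (Finset.inf'_le _ (Finset.mem_univ 0)) ?_
    exact le_trans (min_le_left _ _) (hf _)

lemma repMax_nonneg {br : V → V → V} {f g : V → ℝ} (hf : ∀ y, 0 ≤ f y) {x : V} :
    ∀ t ∈ insert (1:ℝ) (bracketRepMax K br f g x), 0 ≤ t := by
  rintro t (rfl | ⟨n, c, a, b, hx, rfl⟩)
  · norm_num
  · refine le_trans ?_ (Finset.le_sup' _ (Finset.mem_univ 0))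
    exact le_trans (hf _) (le_max_left _ _)

lemma bddAbove_repMin {br : V → V → V} {f g : V → ℝ} (hf : ∀ y, f y ≤ 1) (x : V) :
    BddAbove (insert (0:ℝ) (bracketRepMin K br f g x)) :=
  ⟨1, fun t ht => repMin_le_one K hf t ht⟩

lemma bddBelow_repMax {br : V → V → V} {f g : V → ℝ} (hf : ∀ y, 0 ≤ f y) (x : V) :
    BddBelow (insert (1:ℝ) (bracketRepMax K br f g x)) :=
  ⟨0, fun t ht => repMax_nonneg K hf t ht⟩

variable (br : V → V → V)

/-- Abbreviation for the sup-side bracket value. -/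
noncomputable def brS (f g : V → ℝ) (x : V) : ℝ :=
  sSup (insert 0 (bracketRepMin K br f g x))

/-- Abbreviation for the inf-side bracket value. -/
noncomputable def brI (f g : V → ℝ) (x : V) : ℝ :=
  sInf (insert 1 (bracketRepMax K br f g x))

lemma bracket_r (A B : CIFSet V) : (CIFSet.bracket K br A B).r = brS K br A.r B.r := rfl
lemma bracket_w (A B : CIFSet V) : (CIFSet.bracket K br A B).w = brS K br A.w B.w := rfl
lemma bracket_rhat (A B : CIFSet V) :
    (CIFSet.bracket K br A B).rhat = brI K br A.rhat B.rhat := rfl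
lemma bracket_what (A B : CIFSet V) :
    (CIFSet.bracket K br A B).what = brI K br A.what B.what := rfl

lemma brS_nonneg {f g : V → ℝ} (hf : ∀ y, f y ≤ 1) (x : V) : 0 ≤ brS K br f g x :=
  le_csSup (bddAbove_repMin K hf x) (Set.mem_insert _ _)

lemma brS_le_one {f g : V → ℝ} (hf : ∀ y, f y ≤ 1) (x : V) : brS K br f g x ≤ 1 :=
  csSup_le ⟨0, Set.mem_insert _ _⟩ (repMin_le_one K hf)

lemma brI_le_one {f g : V → ℝ} (hf : ∀ y, 0 ≤ f y) (x : V) : brI K br f g x ≤ 1 :=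
  csInf_le (bddBelow_repMax K hf x) (Set.mem_insert _ _)

lemma brI_nonneg {f g : V → ℝ} (hf : ∀ y, 0 ≤ f y) (x : V) : 0 ≤ brI K br f g x :=
  le_csInf ⟨1, Set.mem_insert _ _⟩ (repMax_nonneg K hf)

lemma repMin_mono {f f' g : V → ℝ} (hff' : ∀ y, f y ≤ f' y) {x : V} {t : ℝ}
    (ht : t ∈ bracketRepMin K br f g x) :
    ∃ t' ∈ bracketRepMin K br f' g x, t ≤ t' := by
  obtain ⟨n, c, a, b, hx, rfl⟩ := ht
  refine ⟨_, mem_repMin K c a b hx, ?_⟩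
  refine Finset.le_inf' _ _ fun i _ => ?_
  refine le_trans (Finset.inf'_le _ (Finset.mem_univ i)) ?_
  exact min_le_min (hff' _) le_rfl

lemma repMax_mono {f f' g : V → ℝ} (hff' : ∀ y, f' y ≤ f y) {x : V} {t : ℝ}
    (ht : t ∈ bracketRepMax K br f g x) :
    ∃ t' ∈ bracketRepMax K br f' g x, t' ≤ t := by
  obtain ⟨n, c, a, b, hx, rfl⟩ := ht
  refine ⟨_, mem_repMax K c a b hx, ?_⟩
  refine Finset.sup'_le _ _ fun i _ => ?_
  refine le_trans ?_ (Finset.le_sup' _ (Finset.mem_univ i))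
  exact max_le_max (hff' _) le_rfl

lemma combine_repMin {f g : V → ℝ} {x y : V} {s t : ℝ}
    (hs : s ∈ bracketRepMin K br f g x) (ht : t ∈ bracketRepMin K br f g y) :
    ∃ u ∈ bracketRepMin K br f g (x + y), min s t ≤ u := by
  obtain ⟨n, c, a, b, hx, rfl⟩ := hs
  obtain ⟨m, d, p, q, hy, rfl⟩ := ht
  let cc : Fin ((n + 1) + (m + 1)) → K := Fin.append c d
  let aa : Fin ((n + 1) + (m + 1)) → V := Fin.append a p
  let bb : Fin ((n + 1) + (m + 1)) → V := Fin.append b q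
  refine ⟨_, ⟨n + 1 + m, cc, aa, bb, ?_, rfl⟩, ?_⟩
  · show x + y = ∑ i : Fin ((n + 1) + (m + 1)), cc i • br (aa i) (bb i)
    rw [Fin.sum_univ_add]
    simp only [cc, aa, bb, Fin.append_left, Fin.append_right]
    rw [← hx, ← hy]
  · refine Finset.le_inf' _ _ fun i _ => ?_
    have key : ∀ j : Fin ((n + 1) + (m + 1)),
        min (Finset.univ.inf' Finset.univ_nonempty fun i => min (f (a i)) (g (b i)))
          (Finset.univ.inf' Finset.univ_nonempty fun i => min (f (p i)) (g (q i))) ≤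
        min (f (aa j)) (g (bb j)) := by
      intro j
      refine Fin.addCases (fun j₁ => ?_) (fun j₂ => ?_) j
      · simp only [aa, bb, Fin.append_left]
        exact le_trans (min_le_left _ _) (Finset.inf'_le _ (Finset.mem_univ j₁))
      · simp only [aa, bb, Fin.append_right]
        exact le_trans (min_le_right _ _) (Finset.inf'_le _ (Finset.mem_univ j₂))
    exact key i

lemma combine_repMax {f g : V → ℝ} {x y : V} {s t : ℝ}
    (hs : s ∈ bracketRepMax K br f g x) (ht : t ∈ bracketRepMax K br f g y) :
    ∃ u ∈ bracketRepMax K br f g (x + y), u ≤ max s t := by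
  obtain ⟨n, c, a, b, hx, rfl⟩ := hs
  obtain ⟨m, d, p, q, hy, rfl⟩ := ht
  let cc : Fin ((n + 1) + (m + 1)) → K := Fin.append c d
  let aa : Fin ((n + 1) + (m + 1)) → V := Fin.append a p
  let bb : Fin ((n + 1) + (m + 1)) → V := Fin.append b q
  refine ⟨_, ⟨n + 1 + m, cc, aa, bb, ?_, rfl⟩, ?_⟩
  · show x + y = ∑ i : Fin ((n + 1) + (m + 1)), cc i • br (aa i) (bb i)
    rw [Fin.sum_univ_add]
    simp only [cc, aa, bb, Fin.append_left, Fin.append_right]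
    rw [← hx, ← hy]
  · refine Finset.sup'_le _ _ fun i _ => ?_
    have key : ∀ j : Fin ((n + 1) + (m + 1)),
        max (f (aa j)) (g (bb j)) ≤
        max (Finset.univ.sup' Finset.univ_nonempty fun i => max (f (a i)) (g (b i)))
          (Finset.univ.sup' Finset.univ_nonempty fun i => max (f (p i)) (g (q i))) := by
      intro j
      refine Fin.addCases (fun j₁ => ?_) (fun j₂ => ?_) j
      · simp only [aa, bb, Fin.append_left]
        exact le_trans (Finset.le_sup' (fun i => max (f (a i)) (g (b i)))
          (Finset.mem_univ j₁)) (le_max_left _ _)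
      · simp only [aa, bb, Fin.append_right]
        exact le_trans (Finset.le_sup' (fun i => max (f (p i)) (g (q i)))
          (Finset.mem_univ j₂)) (le_max_right _ _)
    exact key i

/-! #### `supDecomp` / `infDecomp` lemmas -/

lemma bddAbove_supDecomp {f g : V → ℝ} (hf : ∀ y, f y ≤ 1) (x : V) :
    BddAbove (insert (0:ℝ) {t | ∃ a b : V, x = a + b ∧ t = min (f a) (g b)}) := by
  refine ⟨1, ?_⟩
  rintro t (rfl | ⟨a, b, hab, rfl⟩)
  · norm_num
  · exact le_trans (min_le_left _ _) (hf _)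

lemma bddBelow_infDecomp {f g : V → ℝ} (hf : ∀ y, 0 ≤ f y) (x : V) :
    BddBelow (insert (1:ℝ) {t | ∃ a b : V, x = a + b ∧ t = max (f a) (g b)}) := by
  refine ⟨0, ?_⟩
  rintro t (rfl | ⟨a, b, hab, rfl⟩)
  · norm_num
  · exact le_trans (hf _) (le_max_left _ _)

lemma le_supDecomp {f g : V → ℝ} (hf : ∀ y, f y ≤ 1) {x a b : V} (hab : x = a + b) :
    min (f a) (g b) ≤ supDecomp f g x :=
  le_csSup (bddAbove_supDecomp hf x) (Set.mem_insert_of_mem _ ⟨a, b, hab, rfl⟩)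

lemma infDecomp_le {f g : V → ℝ} (hf : ∀ y, 0 ≤ f y) {x a b : V} (hab : x = a + b) :
    infDecomp f g x ≤ max (f a) (g b) :=
  csInf_le (bddBelow_infDecomp hf x) (Set.mem_insert_of_mem _ ⟨a, b, hab, rfl⟩)

lemma supDecomp_le {f g : V → ℝ} {x : V} {M : ℝ} (hM : 0 ≤ M)
    (h : ∀ a b : V, x = a + b → min (f a) (g b) ≤ M) : supDecomp f g x ≤ M := by
  refine csSup_le ⟨0, Set.mem_insert _ _⟩ ?_
  rintro t (rfl | ⟨a, b, hab, rfl⟩)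
  · exact hM
  · exact h a b hab

lemma le_infDecomp {f g : V → ℝ} {x : V} {M : ℝ} (hM : M ≤ 1)
    (h : ∀ a b : V, x = a + b → M ≤ max (f a) (g b)) : M ≤ infDecomp f g x := by
  refine le_csInf ⟨1, Set.mem_insert _ _⟩ ?_
  rintro t (rfl | ⟨a, b, hab, rfl⟩)
  · exact hM
  · exact h a b hab

lemma supDecomp_nonneg {f g : V → ℝ} (hf : ∀ y, f y ≤ 1) (hf0 : ∀ y, 0 ≤ f y)
    (hg0 : ∀ y, 0 ≤ g y) (x : V) : 0 ≤ supDecomp f g x :=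
  le_csSup (bddAbove_supDecomp hf x) (Set.mem_insert _ _)

lemma supDecomp_le_one {f g : V → ℝ} (hf : ∀ y, f y ≤ 1) (x : V) :
    supDecomp f g x ≤ 1 :=
  supDecomp_le zero_le_one fun _ _ _ => le_trans (min_le_left _ _) (hf _)

lemma infDecomp_nonneg {f g : V → ℝ} (hf : ∀ y, 0 ≤ f y) (x : V) :
    0 ≤ infDecomp f g x :=
  le_infDecomp zero_le_one fun _ _ _ => le_trans (hf _) (le_max_left _ _)

lemma infDecomp_le_one {f g : V → ℝ} (hf : ∀ y, 0 ≤ f y) (x : V) :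
    infDecomp f g x ≤ 1 :=
  csInf_le (bddBelow_infDecomp hf x) (Set.mem_insert _ _)

lemma left_le_supDecomp {f g : V → ℝ} (hf : ∀ y, f y ≤ 1) (hg0 : g 0 = 1) (a : V) :
    f a ≤ supDecomp f g a := by
  have := le_supDecomp (g := g) hf (a := a) (b := 0) (add_zero a).symm
  rwa [hg0, min_eq_left (hf a)] at this

lemma right_le_supDecomp {f g : V → ℝ} (hf : ∀ y, f y ≤ 1) (hg : ∀ y, g y ≤ 1)
    (hf0 : f 0 = 1) (a : V) : g a ≤ supDecomp f g a := by
  have := le_supDecomp (g := g) hf (a := (0:V)) (b := a) (zero_add a).symm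
  rwa [hf0, min_eq_right (hg a)] at this

lemma infDecomp_le_left {f g : V → ℝ} (hf : ∀ y, 0 ≤ f y) (hg0 : g 0 = 0)
    (hf0 : ∀ y, 0 ≤ f y) (a : V) : infDecomp f g a ≤ f a := by
  have := infDecomp_le (g := g) hf (a := a) (b := 0) (add_zero a).symm
  rwa [hg0, max_eq_left (hf a)] at this

lemma infDecomp_le_right {f g : V → ℝ} (hf : ∀ y, 0 ≤ f y) (hg : ∀ y, 0 ≤ g y)
    (hf0 : f 0 = 0) (a : V) : infDecomp f g a ≤ g a := by
  have := infDecomp_le (g := g) hf (a := (0:V)) (b := a) (zero_add a).symm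
  rwa [hf0, max_eq_right (hg a)] at this

/-! #### Scalar invariance of bracket representation sets -/

lemma repMin_smul {f g : V → ℝ} {c : K} (hc : c ≠ 0) (x : V) :
    bracketRepMin K br f g (c • x) = bracketRepMin K br f g x := by
  ext t
  constructor
  · rintro ⟨n, cc, a, b, hx, rfl⟩
    refine ⟨n, fun i => c⁻¹ * cc i, a, b, ?_, rfl⟩
    have := congrArg (fun z => c⁻¹ • z) hx
    simpa [Finset.smul_sum, smul_smul, inv_smul_smul₀ hc] using this
  · rintro ⟨n, cc, a, b, hx, rfl⟩
    refine ⟨n, fun i => c * cc i, a, b, ?_, rfl⟩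
    have := congrArg (fun z => c • z) hx
    simpa [Finset.smul_sum, smul_smul] using this

lemma repMax_smul {f g : V → ℝ} {c : K} (hc : c ≠ 0) (x : V) :
    bracketRepMax K br f g (c • x) = bracketRepMax K br f g x := by
  ext t
  constructor
  · rintro ⟨n, cc, a, b, hx, rfl⟩
    refine ⟨n, fun i => c⁻¹ * cc i, a, b, ?_, rfl⟩
    have := congrArg (fun z => c⁻¹ • z) hx
    simpa [Finset.smul_sum, smul_smul, inv_smul_smul₀ hc] using this
  · rintro ⟨n, cc, a, b, hx, rfl⟩
    refine ⟨n, fun i => c * cc i, a, b, ?_, rfl⟩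
    have := congrArg (fun z => c • z) hx
    simpa [Finset.smul_sum, smul_smul] using this

lemma smulCIF_bracket {c : K} (hc : c ≠ 0) (A B : CIFSet V) :
    CIFSet.smulCIF c (CIFSet.bracket K br A B) = CIFSet.bracket K br A B := by
  have hinv : c⁻¹ ≠ 0 := inv_ne_zero hc
  refine CIFSet.ext' (fun x => ?_) (fun x => ?_) (fun x => ?_) (fun x => ?_) <;>
      simp only [CIFSet.smulCIF, if_neg hc]
  · show brS K br A.r B.r (c⁻¹ • x) = brS K br A.r B.r x
    unfold brS; rw [repMin_smul K br hinv x]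
  · show brS K br A.w B.w (c⁻¹ • x) = brS K br A.w B.w x
    unfold brS; rw [repMin_smul K br hinv x]
  · show brI K br A.rhat B.rhat (c⁻¹ • x) = brI K br A.rhat B.rhat x
    unfold brI; rw [repMax_smul K br hinv x]
  · show brI K br A.what B.what (c⁻¹ • x) = brI K br A.what B.what x
    unfold brI; rw [repMax_smul K br hinv x]

lemma smulCIF_subspace {c : K} (hc : c ≠ 0) {A : CIFSet V}
    (hA : CIFSet.IsSubspace K A) : CIFSet.smulCIF c A = A := by
  have h1 : ∀ x : V, c • c⁻¹ • x = x := fun x => by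
    rw [smul_smul, mul_inv_cancel₀ hc, one_smul]
  refine CIFSet.ext' (fun x => ?_) (fun x => ?_) (fun x => ?_) (fun x => ?_) <;>
      simp only [CIFSet.smulCIF, if_neg hc]
  · exact le_antisymm (by simpa [h1 x] using hA.smul_r c (c⁻¹ • x)) (hA.smul_r c⁻¹ x)
  · exact le_antisymm (by simpa [h1 x] using hA.smul_w c (c⁻¹ • x)) (hA.smul_w c⁻¹ x)
  · exact le_antisymm (hA.smul_rhat c⁻¹ x) (by simpa [h1 x] using hA.smul_rhat c (c⁻¹ • x))
  · exact le_antisymm (hA.smul_what c⁻¹ x) (by simpa [h1 x] using hA.smul_what c (c⁻¹ • x))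

/-! #### Sums with the delta set -/

lemma supDecomp_delta_left {d f : V → ℝ} (hd0 : d 0 = 1) (hd : ∀ y : V, y ≠ 0 → d y = 0)
    (h0 : ∀ y, 0 ≤ f y) (h1 : ∀ y, f y ≤ 1) (x : V) : supDecomp d f x = f x := by
  have hd1 : ∀ y, d y ≤ 1 := by
    intro y; by_cases hy : y = 0
    · rw [hy, hd0]
    · rw [hd y hy]; norm_num
  refine le_antisymm (supDecomp_le (h0 x) ?_) ?_
  · rintro a b rfl
    by_cases ha : a = 0
    · subst ha; rw [zero_add]; exact min_le_right _ _
    · refine le_trans (min_le_left _ _) ?_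
      rw [hd a ha]; exact h0 _
  · have hmem := le_supDecomp (g := f) hd1 (x := x) (a := (0:V)) (b := x) (zero_add x).symm
    rwa [hd0, min_eq_right (h1 x)] at hmem

lemma supDecomp_delta_right {d f : V → ℝ} (hd0 : d 0 = 1) (hd : ∀ y : V, y ≠ 0 → d y = 0)
    (h0 : ∀ y, 0 ≤ f y) (h1 : ∀ y, f y ≤ 1) (x : V) : supDecomp f d x = f x := by
  refine le_antisymm (supDecomp_le (h0 x) ?_) ?_
  · rintro a b rfl
    by_cases hb : b = 0
    · subst hb; rw [add_zero]; exact min_le_left _ _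
    · refine le_trans (min_le_right _ _) ?_
      rw [hd b hb]; exact h0 _
  · have hmem := le_supDecomp (g := d) h1 (x := x) (a := x) (b := (0:V)) (add_zero x).symm
    rwa [hd0, min_eq_left (h1 x)] at hmem

lemma infDecomp_delta_left {d f : V → ℝ} (hd0 : d 0 = 0) (hd : ∀ y : V, y ≠ 0 → d y = 1)
    (h0 : ∀ y, 0 ≤ f y) (h1 : ∀ y, f y ≤ 1) (x : V) : infDecomp d f x = f x := by
  have hdn : ∀ y, 0 ≤ d y := by
    intro y; by_cases hy : y = 0
    · rw [hy, hd0]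
    · rw [hd y hy]; norm_num
  refine le_antisymm ?_ (le_infDecomp (h1 x) ?_)
  · have hmem := infDecomp_le (g := f) hdn (x := x) (a := (0:V)) (b := x) (zero_add x).symm
    rwa [hd0, max_eq_right (h0 x)] at hmem
  · rintro a b rfl
    by_cases ha : a = 0
    · subst ha; rw [zero_add]; exact le_max_right _ _
    · refine le_trans ?_ (le_max_left _ _)
      rw [hd a ha]; exact h1 _

lemma infDecomp_delta_right {d f : V → ℝ} (hd0 : d 0 = 0) (hd : ∀ y : V, y ≠ 0 → d y = 1)
    (h0 : ∀ y, 0 ≤ f y) (h1 : ∀ y, f y ≤ 1) (x : V) : infDecomp f d x = f x := by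
  refine le_antisymm ?_ (le_infDecomp (h1 x) ?_)
  · have hmem := infDecomp_le (g := d) h0 (x := x) (a := x) (b := (0:V)) (add_zero x).symm
    rwa [hd0, max_eq_left (h0 x)] at hmem
  · rintro a b rfl
    by_cases hb : b = 0
    · subst hb; rw [add_zero]; exact le_max_left _ _
    · refine le_trans ?_ (le_max_right _ _)
      rw [hd b hb]; exact h1 _

/-- Bound package for a CIF set. -/
def Bounds (F : CIFSet V) : Prop :=
  ∀ x, (0 ≤ F.r x ∧ F.r x ≤ 1) ∧ (0 ≤ F.w x ∧ F.w x ≤ 1) ∧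
    (0 ≤ F.rhat x ∧ F.rhat x ≤ 1) ∧ (0 ≤ F.what x ∧ F.what x ≤ 1)

lemma bounds_of_isCIF {F : CIFSet V} (h : F.IsCIF) : Bounds F := by
  intro x
  obtain ⟨h1, h2, h3, h4, _⟩ := h x
  exact ⟨⟨h1.1, h1.2⟩, ⟨h2.1, h2.2⟩, ⟨h3.1, h3.2⟩, ⟨h4.1, h4.2⟩⟩

lemma bounds_delta : Bounds (deltaCIF V) := by
  intro x
  exact ⟨⟨deltaCIF_r_nonneg x, deltaCIF_r_le_one x⟩, ⟨deltaCIF_r_nonneg x, deltaCIF_r_le_one x⟩,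
    ⟨deltaCIF_rhat_nonneg x, deltaCIF_rhat_le_one x⟩,
    ⟨deltaCIF_rhat_nonneg x, deltaCIF_rhat_le_one x⟩⟩

lemma bounds_bracket {A B : CIFSet V} (hA : Bounds A) (hB : Bounds B) :
    Bounds (CIFSet.bracket K br A B) := by
  intro x
  exact ⟨⟨brS_nonneg K br (fun y => ((hA y).1.2)) x, brS_le_one K br (fun y => ((hA y).1.2)) x⟩,
    ⟨brS_nonneg K br (fun y => ((hA y).2.1.2)) x, brS_le_one K br (fun y => ((hA y).2.1.2)) x⟩,
    ⟨brI_nonneg K br (fun y => ((hA y).2.2.1.1)) x, brI_le_one K br (fun y => ((hA y).2.2.1.1)) x⟩,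
    ⟨brI_nonneg K br (fun y => ((hA y).2.2.2.1)) x, brI_le_one K br (fun y => ((hA y).2.2.2.1)) x⟩⟩

lemma deltaCIF_sum {F : CIFSet V} (hF : Bounds F) : (deltaCIF V).sum F = F := by
  refine CIFSet.ext' (fun x => ?_) (fun x => ?_) (fun x => ?_) (fun x => ?_)
  · exact supDecomp_delta_left deltaCIF_r_zero (fun y hy => deltaCIF_r_ne hy)
      (fun y => (hF y).1.1) (fun y => (hF y).1.2) x
  · exact supDecomp_delta_left deltaCIF_r_zero (fun y hy => deltaCIF_r_ne hy)
      (fun y => (hF y).2.1.1) (fun y => (hF y).2.1.2) x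
  · exact infDecomp_delta_left deltaCIF_rhat_zero (fun y hy => deltaCIF_rhat_ne hy)
      (fun y => (hF y).2.2.1.1) (fun y => (hF y).2.2.1.2) x
  · exact infDecomp_delta_left deltaCIF_rhat_zero (fun y hy => deltaCIF_rhat_ne hy)
      (fun y => (hF y).2.2.2.1) (fun y => (hF y).2.2.2.2) x

lemma sum_deltaCIF {F : CIFSet V} (hF : Bounds F) : F.sum (deltaCIF V) = F := by
  refine CIFSet.ext' (fun x => ?_) (fun x => ?_) (fun x => ?_) (fun x => ?_)
  · exact supDecomp_delta_right deltaCIF_r_zero (fun y hy => deltaCIF_r_ne hy)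
      (fun y => (hF y).1.1) (fun y => (hF y).1.2) x
  · exact supDecomp_delta_right deltaCIF_r_zero (fun y hy => deltaCIF_r_ne hy)
      (fun y => (hF y).2.1.1) (fun y => (hF y).2.1.2) x
  · exact infDecomp_delta_right deltaCIF_rhat_zero (fun y hy => deltaCIF_rhat_ne hy)
      (fun y => (hF y).2.2.1.1) (fun y => (hF y).2.2.1.2) x
  · exact infDecomp_delta_right deltaCIF_rhat_zero (fun y hy => deltaCIF_rhat_ne hy)
      (fun y => (hF y).2.2.2.1) (fun y => (hF y).2.2.2.2) x

/-! #### Bracket with the delta set -/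

lemma brS_delta {d g : V → ℝ} (hbr0 : ∀ y : V, br 0 y = 0)
    (hd0 : d 0 = 1) (hd : ∀ y : V, y ≠ 0 → d y = 0)
    (hg0 : g 0 = 1) (hg1 : ∀ y, g y ≤ 1) (x : V) : brS K br d g x = d x := by
  have hd1 : ∀ y, d y ≤ 1 := by
    intro y; by_cases hy : y = 0
    · rw [hy, hd0]
    · rw [hd y hy]; norm_num
  have hd0' : ∀ y, (0:ℝ) ≤ d y := by
    intro y; by_cases hy : y = 0
    · rw [hy, hd0]; norm_num
    · rw [hd y hy]
  by_cases hx : x = 0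
  · subst hx
    rw [hd0]
    refine le_antisymm (brS_le_one K br hd1 0) ?_
    have hmem : min (d 0) (g 0) ∈ bracketRepMin K br d g (0 : V) := by
      have := single_mem_repMin K (br := br) (f := d) (g := g) (1 : K) 0 0
      rwa [hbr0 0, smul_zero] at this
    have := le_csSup (bddAbove_repMin K hd1 (0:V)) (Set.mem_insert_of_mem _ hmem)
    rwa [hd0, hg0, min_self] at this
  · rw [hd x hx]
    refine le_antisymm ?_ (brS_nonneg K br hd1 x)
    refine csSup_le ⟨0, Set.mem_insert _ _⟩ ?_
    rintro t (rfl | ⟨n, c, a, b, hrep, rfl⟩)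
    · exact le_refl 0
    · have hne : ∃ i, a i ≠ 0 := by
        by_contra h
        push_neg at h
        apply hx
        rw [hrep]
        refine Finset.sum_eq_zero fun i _ => ?_
        rw [h i, hbr0, smul_zero]
      obtain ⟨i, hi⟩ := hne
      refine le_trans (Finset.inf'_le _ (Finset.mem_univ i)) ?_
      refine le_trans (min_le_left _ _) ?_
      rw [hd _ hi]

lemma brI_delta {d g : V → ℝ} (hbr0 : ∀ y : V, br 0 y = 0)
    (hd0 : d 0 = 0) (hd : ∀ y : V, y ≠ 0 → d y = 1)
    (hg0 : g 0 = 0) (hg1 : ∀ y, 0 ≤ g y) (x : V) : brI K br d g x = d x := by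
  have hd0' : ∀ y, (0:ℝ) ≤ d y := by
    intro y; by_cases hy : y = 0
    · rw [hy, hd0]
    · rw [hd y hy]; norm_num
  by_cases hx : x = 0
  · subst hx
    rw [hd0]
    refine le_antisymm ?_ (brI_nonneg K br hd0' 0)
    have hmem : max (d 0) (g 0) ∈ bracketRepMax K br d g (0 : V) := by
      have := single_mem_repMax K (br := br) (f := d) (g := g) (1 : K) 0 0
      rwa [hbr0 0, smul_zero] at this
    have := csInf_le (bddBelow_repMax K hd0' (0:V)) (Set.mem_insert_of_mem _ hmem)
    rwa [hd0, hg0, max_self] at this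
  · rw [hd x hx]
    refine le_antisymm (brI_le_one K br hd0' x) ?_
    refine le_csInf ⟨1, Set.mem_insert _ _⟩ ?_
    rintro t (rfl | ⟨n, c, a, b, hrep, rfl⟩)
    · exact le_refl 1
    · have hne : ∃ i, a i ≠ 0 := by
        by_contra h
        push_neg at h
        apply hx
        rw [hrep]
        refine Finset.sum_eq_zero fun i _ => ?_
        rw [h i, hbr0, smul_zero]
      obtain ⟨i, hi⟩ := hne
      refine le_trans ?_ (Finset.le_sup' (fun i => max (d (a i)) (g (b i)))
        (Finset.mem_univ i))
      refine le_trans ?_ (le_max_left _ _)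
      rw [hd _ hi]

lemma bracket_delta {B : CIFSet V} (hbr0 : ∀ y : V, br 0 y = 0)
    (hB : Bounds B) (hr0 : B.r 0 = 1) (hw0 : B.w 0 = 1)
    (hrh0 : B.rhat 0 = 0) (hwh0 : B.what 0 = 0) :
    CIFSet.bracket K br (deltaCIF V) B = deltaCIF V := by
  refine CIFSet.ext' (fun x => ?_) (fun x => ?_) (fun x => ?_) (fun x => ?_)
  · exact brS_delta K br hbr0 deltaCIF_r_zero (fun y hy => deltaCIF_r_ne hy)
      hr0 (fun y => (hB y).1.2) x
  · exact brS_delta K br hbr0 deltaCIF_r_zero (fun y hy => deltaCIF_r_ne hy)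
      hw0 (fun y => (hB y).2.1.2) x
  · exact brI_delta K br hbr0 deltaCIF_rhat_zero (fun y hy => deltaCIF_rhat_ne hy)
      hrh0 (fun y => (hB y).2.2.1.1) x
  · exact brI_delta K br hbr0 deltaCIF_rhat_zero (fun y hy => deltaCIF_rhat_ne hy)
      hwh0 (fun y => (hB y).2.2.2.1) x

/-! #### The flip lemma -/

lemma repMin_flip (f g : V → ℝ) (x : V) :
    bracketRepMin K br f g x = bracketRepMin K (fun u v => br v u) g f x := by
  ext t
  constructor
  · rintro ⟨n, c, a, b, hx, rfl⟩
    exact ⟨n, c, b, a, hx, Finset.inf'_congr _ rfl (fun i _ => min_comm _ _)⟩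
  · rintro ⟨n, c, a, b, hx, rfl⟩
    exact ⟨n, c, b, a, hx, Finset.inf'_congr _ rfl (fun i _ => min_comm _ _)⟩

lemma repMax_flip (f g : V → ℝ) (x : V) :
    bracketRepMax K br f g x = bracketRepMax K (fun u v => br v u) g f x := by
  ext t
  constructor
  · rintro ⟨n, c, a, b, hx, rfl⟩
    exact ⟨n, c, b, a, hx, Finset.sup'_congr _ rfl (fun i _ => max_comm _ _)⟩
  · rintro ⟨n, c, a, b, hx, rfl⟩
    exact ⟨n, c, b, a, hx, Finset.sup'_congr _ rfl (fun i _ => max_comm _ _)⟩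

lemma bracket_flip (A B : CIFSet V) :
    CIFSet.bracket K br A B = CIFSet.bracket K (fun u v => br v u) B A := by
  refine CIFSet.ext' (fun x => ?_) (fun x => ?_) (fun x => ?_) (fun x => ?_)
  · show sSup _ = sSup _; rw [repMin_flip K br A.r B.r x]
  · show sSup _ = sSup _; rw [repMin_flip K br A.w B.w x]
  · show sInf _ = sInf _; rw [repMax_flip K br A.rhat B.rhat x]
  · show sInf _ = sInf _; rw [repMax_flip K br A.what B.what x]

/-! #### The main distributivity lemmas -/

lemma main_sup (hbr : ∀ u v b : V, br (u + v) b = br u b + br v b)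
    (f₁ f₂ g : V → ℝ)
    (hf₁0 : ∀ y, 0 ≤ f₁ y) (hf₁1 : ∀ y, f₁ y ≤ 1)
    (hf₂0 : ∀ y, 0 ≤ f₂ y) (hf₂1 : ∀ y, f₂ y ≤ 1)
    (hg1 : ∀ y, g y ≤ 1)
    (h10 : f₁ 0 = 1) (h20 : f₂ 0 = 1) (x : V) :
    brS K br (supDecomp f₁ f₂) g x = supDecomp (brS K br f₁ g) (brS K br f₂ g) x := by
  have hF1 : ∀ y, supDecomp f₁ f₂ y ≤ 1 := supDecomp_le_one hf₁1
  have hBr1le : ∀ y, brS K br f₁ g y ≤ 1 := brS_le_one K br hf₁1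
  have hBr2le : ∀ y, brS K br f₂ g y ≤ 1 := brS_le_one K br hf₂1
  have hf₁F : ∀ y, f₁ y ≤ supDecomp f₁ f₂ y := left_le_supDecomp hf₁1 h20
  have hf₂F : ∀ y, f₂ y ≤ supDecomp f₁ f₂ y := right_le_supDecomp hf₁1 hf₂1 h10
  refine le_antisymm ?_ ?_
  · refine csSup_le ⟨0, Set.mem_insert _ _⟩ ?_
    rintro t (rfl | ⟨n, c, a, b, hx, rfl⟩)
    · exact supDecomp_nonneg hBr1le (brS_nonneg K br hf₁1) (brS_nonneg K br hf₂1) x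
    · set m := Finset.univ.inf' Finset.univ_nonempty
        (fun i => min (supDecomp f₁ f₂ (a i)) (g (b i))) with hm
      refine le_of_forall_sub_le fun ε hε => ?_
      have hkey : ∀ i : Fin (n + 1), ∃ u v : V,
          a i = u + v ∧ m - ε ≤ min (f₁ u) (f₂ v) := by
        intro i
        have hmF : m ≤ supDecomp f₁ f₂ (a i) :=
          le_trans (Finset.inf'_le _ (Finset.mem_univ i)) (min_le_left _ _)
        have hlt : m - ε < supDecomp f₁ f₂ (a i) := lt_of_lt_of_le (by linarith) hmF
        obtain ⟨t, ht, hlt'⟩ := exists_lt_of_lt_csSup ⟨0, Set.mem_insert _ _⟩ hlt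
        rcases ht with rfl | ⟨u, v, huv, rfl⟩
        · refine ⟨a i, 0, (add_zero _).symm, ?_⟩
          have h0' : (0:ℝ) ≤ min (f₁ (a i)) (f₂ 0) := le_min (hf₁0 _) (by rw [h20]; norm_num)
          linarith [hlt'.le]
        · exact ⟨u, v, huv, hlt'.le⟩
      choose u v huv hmin using hkey
      have hxpq : x = (∑ i, c i • br (u i) (b i)) + (∑ i, c i • br (v i) (b i)) := by
        rw [hx, ← Finset.sum_add_distrib]
        refine Finset.sum_congr rfl fun i _ => ?_
        rw [huv i, hbr, smul_add]
      have h1 : m - ε ≤ brS K br f₁ g (∑ i, c i • br (u i) (b i)) := by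
        refine le_trans ?_ (le_csSup (bddAbove_repMin K hf₁1 _)
          (Set.mem_insert_of_mem _ (mem_repMin K c u b rfl)))
        refine Finset.le_inf' _ _ fun i _ => ?_
        refine le_min (le_trans (hmin i) (min_le_left _ _)) ?_
        have hmg : m ≤ g (b i) :=
          le_trans (Finset.inf'_le _ (Finset.mem_univ i)) (min_le_right _ _)
        linarith
      have h2 : m - ε ≤ brS K br f₂ g (∑ i, c i • br (v i) (b i)) := by
        refine le_trans ?_ (le_csSup (bddAbove_repMin K hf₂1 _)
          (Set.mem_insert_of_mem _ (mem_repMin K c v b rfl)))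
        refine Finset.le_inf' _ _ fun i _ => ?_
        refine le_min (le_trans (hmin i) (min_le_right _ _)) ?_
        have hmg : m ≤ g (b i) :=
          le_trans (Finset.inf'_le _ (Finset.mem_univ i)) (min_le_right _ _)
        linarith
      exact le_trans (le_min h1 h2) (le_supDecomp hBr1le hxpq)
  · refine csSup_le ⟨0, Set.mem_insert _ _⟩ ?_
    rintro t (rfl | ⟨p, q, hpq, rfl⟩)
    · exact brS_nonneg K br hF1 x
    · by_contra hcon
      push_neg at hcon
      set L := brS K br (supDecomp f₁ f₂) g x with hLdef
      have hL0 : 0 ≤ L := brS_nonneg K br hF1 x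
      have h1 : L < brS K br f₁ g p := lt_of_lt_of_le hcon (min_le_left _ _)
      have h2 : L < brS K br f₂ g q := lt_of_lt_of_le hcon (min_le_right _ _)
      obtain ⟨s, hs, hLs⟩ := exists_lt_of_lt_csSup ⟨0, Set.mem_insert _ _⟩ h1
      obtain ⟨t', ht', hLt'⟩ := exists_lt_of_lt_csSup ⟨0, Set.mem_insert _ _⟩ h2
      rcases hs with rfl | hs
      · exact absurd hLs (not_lt.mpr hL0)
      rcases ht' with rfl | ht'
      · exact absurd hLt' (not_lt.mpr hL0)
      obtain ⟨s', hs', hss'⟩ := repMin_mono K br hf₁F hs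
      obtain ⟨t'', ht'', htt''⟩ := repMin_mono K br hf₂F ht'
      obtain ⟨w, hw, hmw⟩ := combine_repMin K br hs' ht''
      rw [← hpq] at hw
      have hwL : w ≤ L := le_csSup (bddAbove_repMin K hF1 x) (Set.mem_insert_of_mem _ hw)
      have hlt : L < min s' t'' := lt_min (lt_of_lt_of_le hLs hss') (lt_of_lt_of_le hLt' htt'')
      linarith [le_trans hmw hwL]

lemma main_inf (hbr : ∀ u v b : V, br (u + v) b = br u b + br v b)
    (f₁ f₂ g : V → ℝ)
    (hf₁0 : ∀ y, 0 ≤ f₁ y) (hf₁1 : ∀ y, f₁ y ≤ 1)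
    (hf₂0 : ∀ y, 0 ≤ f₂ y) (hf₂1 : ∀ y, f₂ y ≤ 1)
    (hg0 : ∀ y, 0 ≤ g y)
    (h10 : f₁ 0 = 0) (h20 : f₂ 0 = 0) (x : V) :
    brI K br (infDecomp f₁ f₂) g x = infDecomp (brI K br f₁ g) (brI K br f₂ g) x := by
  have hF0 : ∀ y, 0 ≤ infDecomp f₁ f₂ y := infDecomp_nonneg hf₁0
  have hI1 : ∀ y, 0 ≤ brI K br f₁ g y := brI_nonneg K br hf₁0
  have hI2 : ∀ y, 0 ≤ brI K br f₂ g y := brI_nonneg K br hf₂0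
  have hFf₁ : ∀ y, infDecomp f₁ f₂ y ≤ f₁ y := infDecomp_le_left hf₁0 h20 hf₁0
  have hFf₂ : ∀ y, infDecomp f₁ f₂ y ≤ f₂ y := infDecomp_le_right hf₁0 hf₂0 h10
  refine le_antisymm ?_ ?_
  · refine le_csInf ⟨1, Set.mem_insert _ _⟩ ?_
    rintro t (rfl | ⟨p, q, hpq, rfl⟩)
    · exact brI_le_one K br hF0 x
    · by_contra hcon
      push_neg at hcon
      set L := brI K br (infDecomp f₁ f₂) g x with hLdef
      have hL1 : L ≤ 1 := brI_le_one K br hF0 x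
      have h1 : brI K br f₁ g p < L := lt_of_le_of_lt (le_max_left _ _) hcon
      have h2 : brI K br f₂ g q < L := lt_of_le_of_lt (le_max_right _ _) hcon
      obtain ⟨s, hs, hLs⟩ := exists_lt_of_csInf_lt ⟨1, Set.mem_insert _ _⟩ h1
      obtain ⟨t', ht', hLt'⟩ := exists_lt_of_csInf_lt ⟨1, Set.mem_insert _ _⟩ h2
      rcases hs with rfl | hs
      · exact absurd hLs (not_lt.mpr hL1)
      rcases ht' with rfl | ht'
      · exact absurd hLt' (not_lt.mpr hL1)
      obtain ⟨s', hs', hss'⟩ := repMax_mono K br hFf₁ hs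
      obtain ⟨t'', ht'', htt''⟩ := repMax_mono K br hFf₂ ht'
      obtain ⟨w, hw, hmw⟩ := combine_repMax K br hs' ht''
      rw [← hpq] at hw
      have hwL : L ≤ w := csInf_le (bddBelow_repMax K hF0 x) (Set.mem_insert_of_mem _ hw)
      have hlt : max s' t'' < L := max_lt (lt_of_le_of_lt hss' hLs) (lt_of_le_of_lt htt'' hLt')
      linarith [le_trans hwL hmw]
  · refine le_csInf ⟨1, Set.mem_insert _ _⟩ ?_
    rintro t (rfl | ⟨n, c, a, b, hx, rfl⟩)
    · exact infDecomp_le_one hI1 x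
    · set m := Finset.univ.sup' Finset.univ_nonempty
        (fun i => max (infDecomp f₁ f₂ (a i)) (g (b i))) with hm
      refine le_of_forall_sub_le fun ε hε => ?_
      have hkey : ∀ i : Fin (n + 1), ∃ u v : V,
          a i = u + v ∧ max (f₁ u) (f₂ v) ≤ m + ε := by
        intro i
        have hmF : infDecomp f₁ f₂ (a i) ≤ m :=
          le_trans (le_max_left _ _)
            (Finset.le_sup' (fun i => max (infDecomp f₁ f₂ (a i)) (g (b i)))
              (Finset.mem_univ i))
        have hlt : infDecomp f₁ f₂ (a i) < m + ε := lt_of_le_of_lt hmF (by linarith)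
        obtain ⟨t, ht, hlt'⟩ := exists_lt_of_csInf_lt ⟨1, Set.mem_insert _ _⟩ hlt
        rcases ht with rfl | ⟨u, v, huv, rfl⟩
        · refine ⟨a i, 0, (add_zero _).symm, ?_⟩
          have h1' : max (f₁ (a i)) (f₂ 0) ≤ 1 := max_le (hf₁1 _) (by rw [h20]; norm_num)
          linarith [hlt'.le]
        · exact ⟨u, v, huv, hlt'.le⟩
      choose u v huv hmax using hkey
      have hxpq : x = (∑ i, c i • br (u i) (b i)) + (∑ i, c i • br (v i) (b i)) := by
        rw [hx, ← Finset.sum_add_distrib]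
        refine Finset.sum_congr rfl fun i _ => ?_
        rw [huv i, hbr, smul_add]
      have h1 : brI K br f₁ g (∑ i, c i • br (u i) (b i)) ≤ m + ε := by
        refine le_trans (csInf_le (bddBelow_repMax K hf₁0 _)
          (Set.mem_insert_of_mem _ (mem_repMax K c u b rfl))) ?_
        refine Finset.sup'_le _ _ fun i _ => ?_
        refine max_le (le_trans (le_max_left _ _) (hmax i)) ?_
        have hmg : g (b i) ≤ m :=
          le_trans (le_max_right _ _)
            (Finset.le_sup' (fun i => max (infDecomp f₁ f₂ (a i)) (g (b i)))
              (Finset.mem_univ i))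
        linarith
      have h2 : brI K br f₂ g (∑ i, c i • br (v i) (b i)) ≤ m + ε := by
        refine le_trans (csInf_le (bddBelow_repMax K hf₂0 _)
          (Set.mem_insert_of_mem _ (mem_repMax K c v b rfl))) ?_
        refine Finset.sup'_le _ _ fun i _ => ?_
        refine max_le (le_trans (le_max_right _ _) (hmax i)) ?_
        have hmg : g (b i) ≤ m :=
          le_trans (le_max_right _ _)
            (Finset.le_sup' (fun i => max (infDecomp f₁ f₂ (a i)) (g (b i)))
              (Finset.mem_univ i))
        linarith
      have := le_trans (infDecomp_le hI1 hxpq) (max_le h1 h2)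
      linarith

lemma bracket_sum_left (hbr : ∀ u v b : V, br (u + v) b = br u b + br v b)
    {A₁ A₂ B : CIFSet V} (hA₁ : CIFSet.IsSubspace K A₁) (hA₂ : CIFSet.IsSubspace K A₂)
    (hB : CIFSet.IsSubspace K B) :
    CIFSet.bracket K br (A₁.sum A₂) B
      = (CIFSet.bracket K br A₁ B).sum (CIFSet.bracket K br A₂ B) := by
  refine CIFSet.ext' (fun x => ?_) (fun x => ?_) (fun x => ?_) (fun x => ?_)
  · exact main_sup K br hbr A₁.r A₂.r B.r
      (fun y => (hA₁.isCIF y).1.1) (fun y => (hA₁.isCIF y).1.2)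
      (fun y => (hA₂.isCIF y).1.1) (fun y => (hA₂.isCIF y).1.2)
      (fun y => (hB.isCIF y).1.2) hA₁.r_zero hA₂.r_zero x
  · exact main_sup K br hbr A₁.w A₂.w B.w
      (fun y => (hA₁.isCIF y).2.1.1) (fun y => (hA₁.isCIF y).2.1.2)
      (fun y => (hA₂.isCIF y).2.1.1) (fun y => (hA₂.isCIF y).2.1.2)
      (fun y => (hB.isCIF y).2.1.2) hA₁.w_zero hA₂.w_zero x
  · exact main_inf K br hbr A₁.rhat A₂.rhat B.rhat
      (fun y => (hA₁.isCIF y).2.2.1.1) (fun y => (hA₁.isCIF y).2.2.1.2)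
      (fun y => (hA₂.isCIF y).2.2.1.1) (fun y => (hA₂.isCIF y).2.2.1.2)
      (fun y => (hB.isCIF y).2.2.1.1) hA₁.rhat_zero hA₂.rhat_zero x
  · exact main_inf K br hbr A₁.what A₂.what B.what
      (fun y => (hA₁.isCIF y).2.2.2.1.1) (fun y => (hA₁.isCIF y).2.2.2.1.2)
      (fun y => (hA₂.isCIF y).2.2.2.1.1) (fun y => (hA₂.isCIF y).2.2.2.1.2)
      (fun y => (hB.isCIF y).2.2.2.1.1) hA₁.what_zero hA₂.what_zero x

lemma left_eq (hbr : ∀ u v b : V, br (u + v) b = br u b + br v b)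
    {A₁ A₂ B : CIFSet V} (hA₁ : CIFSet.IsSubspace K A₁) (hA₂ : CIFSet.IsSubspace K A₂)
    (hB : CIFSet.IsSubspace K B) (α β : K) :
    CIFSet.bracket K br ((CIFSet.smulCIF α A₁).sum (CIFSet.smulCIF β A₂)) B
      = (CIFSet.smulCIF α (CIFSet.bracket K br A₁ B)).sum
          (CIFSet.smulCIF β (CIFSet.bracket K br A₂ B)) := by
  have hbr0 : ∀ y : V, br 0 y = 0 := by
    intro y
    have h := hbr 0 0 y
    rw [add_zero] at h
    exact (left_eq_add.mp h)
  rcases eq_or_ne α 0 with rfl | hα <;> rcases eq_or_ne β 0 with rfl | hβ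
  · rw [smulCIF_zero A₁, smulCIF_zero A₂, smulCIF_zero (CIFSet.bracket K br A₁ B),
      smulCIF_zero (CIFSet.bracket K br A₂ B), deltaCIF_sum bounds_delta,
      bracket_delta K br hbr0 (bounds_of_isCIF hB.isCIF) hB.r_zero hB.w_zero
        hB.rhat_zero hB.what_zero]
  · rw [smulCIF_zero, smulCIF_zero, smulCIF_subspace K hβ hA₂, smulCIF_bracket K br hβ,
      deltaCIF_sum (bounds_of_isCIF hA₂.isCIF),
      deltaCIF_sum (bounds_bracket K br (bounds_of_isCIF hA₂.isCIF) (bounds_of_isCIF hB.isCIF))]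
  · rw [smulCIF_zero, smulCIF_zero, smulCIF_subspace K hα hA₁, smulCIF_bracket K br hα,
      sum_deltaCIF (bounds_of_isCIF hA₁.isCIF),
      sum_deltaCIF (bounds_bracket K br (bounds_of_isCIF hA₁.isCIF) (bounds_of_isCIF hB.isCIF))]
  · rw [smulCIF_subspace K hα hA₁, smulCIF_subspace K hβ hA₂, smulCIF_bracket K br hα,
      smulCIF_bracket K br hβ]
    exact bracket_sum_left K br hbr hA₁ hA₂ hB

end Aux

theorem bracket_bilinear {K : Type*} [Field K] {V : Type*} [AddCommGroup V] [Module K V]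
    (V0 V1 : Submodule K V) (br : V → V → V) (hLS : IsLieSuper K V0 V1 br)
    (A₁ A₂ B₁ B₂ A B : CIFSet V)
    (hA₁ : CIFSet.IsSubspace K A₁) (hA₂ : CIFSet.IsSubspace K A₂)
    (hB₁ : CIFSet.IsSubspace K B₁) (hB₂ : CIFSet.IsSubspace K B₂)
    (hA : CIFSet.IsSubspace K A) (hB : CIFSet.IsSubspace K B)
    (α β : K) (L : List (CIFSet V))
    (hL : L = [A₁, A₂, B₁, B₂, A, B,
      CIFSet.smulCIF α A₁, CIFSet.smulCIF β A₂,
      (CIFSet.smulCIF α A₁).sum (CIFSet.smulCIF β A₂),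
      CIFSet.smulCIF α B₁, CIFSet.smulCIF β B₂,
      (CIFSet.smulCIF α B₁).sum (CIFSet.smulCIF β B₂),
      CIFSet.bracket K br A₁ B, CIFSet.bracket K br A₂ B,
      CIFSet.smulCIF α (CIFSet.bracket K br A₁ B),
      CIFSet.smulCIF β (CIFSet.bracket K br A₂ B),
      CIFSet.bracket K br A B₁, CIFSet.bracket K br A B₂,
      CIFSet.smulCIF α (CIFSet.bracket K br A B₁),
      CIFSet.smulCIF β (CIFSet.bracket K br A B₂)])
    (hhom : ∀ C ∈ L, ∀ D ∈ L, C.Homog D) :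
    CIFSet.bracket K br ((CIFSet.smulCIF α A₁).sum (CIFSet.smulCIF β A₂)) B
      = (CIFSet.smulCIF α (CIFSet.bracket K br A₁ B)).sum
          (CIFSet.smulCIF β (CIFSet.bracket K br A₂ B)) ∧
    CIFSet.bracket K br A ((CIFSet.smulCIF α B₁).sum (CIFSet.smulCIF β B₂))
      = (CIFSet.smulCIF α (CIFSet.bracket K br A B₁)).sum
          (CIFSet.smulCIF β (CIFSet.bracket K br A B₂)) := by
  constructor
  · exact left_eq K br hLS.add_left hA₁ hA₂ hB α β
  · rw [bracket_flip K br A ((CIFSet.smulCIF α B₁).sum (CIFSet.smulCIF β B₂)),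
      bracket_flip K br A B₁, bracket_flip K br A B₂]
    exact left_eq K (fun u v => br v u) (fun u v b => hLS.add_right b u v) hB₁ hB₂ hA α β


end CIF
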